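/- Consider the 1D reduced energy F(θ,δρ) with k1 = k2 = k3 > 0, λ1, λ2, f > 0, 0 < θ0 < π/2, and q = 2πn₀/h for a fixed positive integer n₀. The cholesteric configuration (θ ≡ 0, δρ ≡ 0) is a critical point of F for every value of d, and its second variation at a perturbation (η1, η2) equals δ²F(η1,η2) = ∫₀^h [ 2k1(η1')² + 2k1σ²η1² + (d + 2λ2q⁴cos⁴θ0)η2² + 2λ1(η2'' + q²η2)² ] dz. If d + 2λ2q⁴cos⁴θ0 ≥ 0, then δ²F(η1,η2) ≥ 0 for all η1 ∈ W^{1,2}(0,h) and all h-periodic η2 ∈ W^{2,2}, so the cholesteric configuration is stable. If d + 2λ2q⁴cos⁴θ0 < 0, then the perturbation η2(z) = sin(qz) gives δ²F(0, η2) = (h/2)(d + 2λ2q⁴cos⁴θ0) < 0, so the cholesteric configuration is unstable. -/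

import Mathlib

noncomputable section

open MeasureTheory Filter Topology

/-- The 1D reduced energy `F(θ, δρ)` on `[0, h]`:
`∫₀ʰ [k₁θ_z² − k₂²σ²cos²θ/(k₂cos²θ + k₃sin²θ) + (d/2)δρ² + (f/4)δρ⁴
  + λ₁(δρ_zz + q²δρ)² + λ₂(sin²θ·δρ_zz + q²δρcos²θ₀)²] dz`. -/
def F1D (k1 k2 k3 σ d f lam1 lam2 q θ0 h : ℝ) (th ρ : ℝ → ℝ) : ℝ :=
  ∫ z in (0:ℝ)..h,
    (k1 * (deriv th z) ^ 2
      - k2 ^ 2 * σ ^ 2 * Real.cos (th z) ^ 2 /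
          (k2 * Real.cos (th z) ^ 2 + k3 * Real.sin (th z) ^ 2)
      + d / 2 * ρ z ^ 2 + f / 4 * ρ z ^ 4
      + lam1 * (deriv (deriv ρ) z + q ^ 2 * ρ z) ^ 2
      + lam2 * (Real.sin (th z) ^ 2 * deriv (deriv ρ) z
          + q ^ 2 * ρ z * Real.cos θ0 ^ 2) ^ 2)

/-- Membership in `W^{1,2}(0,h)` (encoded via pointwise derivatives). -/
def MemW12I (h : ℝ) (g : ℝ → ℝ) : Prop :=
  MemLp g 2 (volume.restrict (Set.Ioo 0 h)) ∧
    MemLp (deriv g) 2 (volume.restrict (Set.Ioo 0 h))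

/-- `h`-periodic membership in `W^{2,2}`: `g(0) = g(h)`, `g'(0) = g'(h)`,
`g''(0) = g''(h)`, with `g, g', g'' ∈ L²(0,h)`. -/
def PerW22 (h : ℝ) (g : ℝ → ℝ) : Prop :=
  MemLp g 2 (volume.restrict (Set.Ioo 0 h)) ∧
    MemLp (deriv g) 2 (volume.restrict (Set.Ioo 0 h)) ∧
    MemLp (deriv (deriv g)) 2 (volume.restrict (Set.Ioo 0 h)) ∧
    g 0 = g h ∧ deriv g 0 = deriv g h ∧ deriv (deriv g) 0 = deriv (deriv g) h

/-- The claimed second-variation quadratic form of the 1D reduced energy at the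
cholesteric state `(θ ≡ 0, δρ ≡ 0)`:
`δ²F(η₁,η₂) = ∫₀ʰ [2k₁(η₁')² + 2k₁σ²η₁² + (d + 2λ₂q⁴cos⁴θ₀)η₂² + 2λ₁(η₂'' + q²η₂)²]`. -/
def secondVar (k1 σ d lam1 lam2 q θ0 h : ℝ) (g1 g2 : ℝ → ℝ) : ℝ :=
  ∫ z in (0:ℝ)..h,
    (2 * k1 * (deriv g1 z) ^ 2 + 2 * k1 * σ ^ 2 * (g1 z) ^ 2
      + (d + 2 * lam2 * q ^ 4 * Real.cos θ0 ^ 4) * (g2 z) ^ 2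
      + 2 * lam1 * (deriv (deriv g2) z + q ^ 2 * g2 z) ^ 2)


lemma param_hasDerivAt {F F' : ℝ → ℝ → ℝ}
    (hF : Continuous fun p : ℝ × ℝ => F p.1 p.2)
    (hF' : Continuous fun p : ℝ × ℝ => F' p.1 p.2)
    (hd : ∀ z s, HasDerivAt (fun s => F s z) (F' s z) s) (a b s0 : ℝ) :
    HasDerivAt (fun s => ∫ z in a..b, F s z) (∫ z in a..b, F' s0 z) s0 := by
  obtain ⟨C, hC⟩ : ∃ C, ∀ p ∈ (Set.Icc (s0 - 1) (s0 + 1)) ×ˢ Set.uIcc a b,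
      ‖F' p.1 p.2‖ ≤ C :=
    (isCompact_Icc.prod isCompact_uIcc).exists_bound_of_continuousOn hF'.continuousOn
  refine (intervalIntegral.hasDerivAt_integral_of_dominated_loc_of_deriv_le
    (F := F) (F' := F') (bound := fun _ => C) (Metric.ball_mem_nhds s0 one_pos) ?_ ?_ ?_ ?_ ?_ ?_).2
  · exact Filter.Eventually.of_forall fun x =>
      (hF.comp (continuous_const.prodMk continuous_id)).aestronglyMeasurable
  · exact (hF.comp (continuous_const.prodMk continuous_id)).intervalIntegrable a b
  · exact (hF'.comp (continuous_const.prodMk continuous_id)).aestronglyMeasurable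
  · refine Filter.Eventually.of_forall fun t ht x hx => hC (x, t) ⟨?_, Set.uIoc_subset_uIcc ht⟩
    have := Metric.mem_ball.mp hx
    rw [Real.dist_eq] at this
    constructor <;> [linarith [abs_le.mp this.le |>.1]; linarith [abs_le.mp this.le |>.2]]
  · exact intervalIntegrable_const
  · exact Filter.Eventually.of_forall fun t _ x _ => hd t x

def Fi (k1 σ d f lam1 lam2 q C : ℝ) (g1 g2 : ℝ → ℝ) (s z : ℝ) : ℝ :=
  k1*(s*deriv g1 z)^2 - k1*σ^2*Real.cos (s*g1 z)^2 + d/2*(s*g2 z)^2 + f/4*(s*g2 z)^4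
    + lam1*(s*deriv (deriv g2) z + q^2*(s*g2 z))^2
    + lam2*(Real.sin (s*g1 z)^2*(s*deriv (deriv g2) z) + q^2*(s*g2 z)*C)^2

def Fi' (k1 σ d f lam1 lam2 q C : ℝ) (g1 g2 : ℝ → ℝ) (s z : ℝ) : ℝ :=
  2*k1*(deriv g1 z)^2*s + 2*k1*σ^2*(g1 z)*(Real.cos (s*g1 z)*Real.sin (s*g1 z))
    + d*(g2 z)^2*s + f*(g2 z)^4*s^3
    + 2*lam1*(deriv (deriv g2) z + q^2*(g2 z))^2*s
    + 2*lam2*((Real.sin (s*g1 z)^2*(s*deriv (deriv g2) z) + q^2*(s*g2 z)*C)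
        *(2*(g1 z)*(Real.cos (s*g1 z)*Real.sin (s*g1 z)*(s*deriv (deriv g2) z))
          + (Real.sin (s*g1 z)^2*(deriv (deriv g2) z) + q^2*(g2 z)*C)))

def Fi'' (k1 σ d f lam1 lam2 q C : ℝ) (g1 g2 : ℝ → ℝ) (s z : ℝ) : ℝ :=
  2*k1*(deriv g1 z)^2 + 2*k1*σ^2*(g1 z)^2*(Real.cos (s*g1 z)^2 - Real.sin (s*g1 z)^2)
    + d*(g2 z)^2 + 3*f*(g2 z)^4*s^2
    + 2*lam1*(deriv (deriv g2) z + q^2*(g2 z))^2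
    + 2*lam2*((2*(g1 z)*(Real.cos (s*g1 z)*Real.sin (s*g1 z)*(s*deriv (deriv g2) z))
          + (Real.sin (s*g1 z)^2*(deriv (deriv g2) z) + q^2*(g2 z)*C))^2
        + (Real.sin (s*g1 z)^2*(s*deriv (deriv g2) z) + q^2*(s*g2 z)*C)
          * (2*(g1 z)*(deriv (deriv g2) z)*((g1 z)*s*(Real.cos (s*g1 z)^2 - Real.sin (s*g1 z)^2)
              + 2*(Real.cos (s*g1 z)*Real.sin (s*g1 z)))))

lemma hd_pt1 (k1 σ d f lam1 lam2 q C a c u v s : ℝ) :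
    HasDerivAt (fun s => k1*(s*a)^2 - k1*σ^2*Real.cos (s*c)^2 + d/2*(s*u)^2 + f/4*(s*u)^4
        + lam1*(s*v + q^2*(s*u))^2 + lam2*(Real.sin (s*c)^2*(s*v) + q^2*(s*u)*C)^2)
      (2*k1*a^2*s + 2*k1*σ^2*c*(Real.cos (s*c)*Real.sin (s*c)) + d*u^2*s + f*u^4*s^3
        + 2*lam1*(v + q^2*u)^2*s
        + 2*lam2*((Real.sin (s*c)^2*(s*v) + q^2*(s*u)*C)
            *(2*c*(Real.cos (s*c)*Real.sin (s*c)*(s*v)) + (Real.sin (s*c)^2*v + q^2*u*C)))) s := by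
  have hsa : HasDerivAt (fun s : ℝ => s * a) a s := by
    simpa using (hasDerivAt_id s).mul_const a
  have hsu : HasDerivAt (fun s : ℝ => s * u) u s := by
    simpa using (hasDerivAt_id s).mul_const u
  have hsv : HasDerivAt (fun s : ℝ => s * v) v s := by
    simpa using (hasDerivAt_id s).mul_const v
  have hsc : HasDerivAt (fun s : ℝ => s * c) c s := by
    simpa using (hasDerivAt_id s).mul_const c
  have hcos : HasDerivAt (fun s : ℝ => Real.cos (s*c)) (-Real.sin (s*c) * c) s :=
    hsc.cos
  have hsin : HasDerivAt (fun s : ℝ => Real.sin (s*c)) (Real.cos (s*c) * c) s :=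
    hsc.sin
  have hP := ((hsin.pow 2).mul hsv).add ((hsu.const_mul (q^2)).mul_const C)
  have H := (((((hsa.pow 2).const_mul k1).sub ((hcos.pow 2).const_mul (k1*σ^2))).add
      ((hsu.pow 2).const_mul (d/2))).add ((hsu.pow 4).const_mul (f/4))).add
      (((hsv.add (hsu.const_mul (q^2))).pow 2).const_mul lam1) |>.add
      ((hP.pow 2).const_mul lam2)
  refine H.congr_deriv ?_
  norm_num
  ring

lemma hd_pt2 (k1 σ d f lam1 lam2 q C a c u v s : ℝ) :
    HasDerivAt (fun s => 2*k1*a^2*s + 2*k1*σ^2*c*(Real.cos (s*c)*Real.sin (s*c)) + d*u^2*s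
        + f*u^4*s^3 + 2*lam1*(v + q^2*u)^2*s
        + 2*lam2*((Real.sin (s*c)^2*(s*v) + q^2*(s*u)*C)
            *(2*c*(Real.cos (s*c)*Real.sin (s*c)*(s*v)) + (Real.sin (s*c)^2*v + q^2*u*C))))
      (2*k1*a^2 + 2*k1*σ^2*c^2*(Real.cos (s*c)^2 - Real.sin (s*c)^2) + d*u^2 + 3*f*u^4*s^2
        + 2*lam1*(v + q^2*u)^2
        + 2*lam2*((2*c*(Real.cos (s*c)*Real.sin (s*c)*(s*v))
              + (Real.sin (s*c)^2*v + q^2*u*C))^2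
            + (Real.sin (s*c)^2*(s*v) + q^2*(s*u)*C)
              * (2*c*v*(c*s*(Real.cos (s*c)^2 - Real.sin (s*c)^2)
                  + 2*(Real.cos (s*c)*Real.sin (s*c)))))) s := by
  have hsu : HasDerivAt (fun s : ℝ => s * u) u s := by
    simpa using (hasDerivAt_id s).mul_const u
  have hsv : HasDerivAt (fun s : ℝ => s * v) v s := by
    simpa using (hasDerivAt_id s).mul_const v
  have hsc : HasDerivAt (fun s : ℝ => s * c) c s := by
    simpa using (hasDerivAt_id s).mul_const c
  have hid : HasDerivAt (fun s : ℝ => s) 1 s := hasDerivAt_id s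
  have hcos : HasDerivAt (fun s : ℝ => Real.cos (s*c)) (-Real.sin (s*c) * c) s :=
    hsc.cos
  have hsin : HasDerivAt (fun s : ℝ => Real.sin (s*c)) (Real.cos (s*c) * c) s :=
    hsc.sin
  have hP := ((hsin.pow 2).mul hsv).add ((hsu.const_mul (q^2)).mul_const C)
  have hQ := (((hcos.mul hsin).mul hsv).const_mul (2*c)).add
      (((hsin.pow 2).mul_const v).add_const (q^2*u*C))
  have H := ((((((hid.const_mul (2*k1*a^2)).add
      ((hcos.mul hsin).const_mul (2*k1*σ^2*c))).add
      (hid.const_mul (d*u^2))).add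
      ((hasDerivAt_pow 3 s).const_mul (f*u^4))).add
      (hid.const_mul (2*lam1*(v + q^2*u)^2))).add
      ((hP.mul hQ).const_mul (2*lam2)))
  refine H.congr_deriv ?_
  norm_num
  ring

lemma hdFi (k1 σ d f lam1 lam2 q C : ℝ) (g1 g2 : ℝ → ℝ) (z s : ℝ) :
    HasDerivAt (fun s => Fi k1 σ d f lam1 lam2 q C g1 g2 s z)
      (Fi' k1 σ d f lam1 lam2 q C g1 g2 s z) s := by
  unfold Fi Fi'
  have := hd_pt1 k1 σ d f lam1 lam2 q C (deriv g1 z) (g1 z) (g2 z) (deriv (deriv g2) z) s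
  convert this using 2 <;> ring

lemma hdFi' (k1 σ d f lam1 lam2 q C : ℝ) (g1 g2 : ℝ → ℝ) (z s : ℝ) :
    HasDerivAt (fun s => Fi' k1 σ d f lam1 lam2 q C g1 g2 s z)
      (Fi'' k1 σ d f lam1 lam2 q C g1 g2 s z) s := by
  unfold Fi' Fi''
  have := hd_pt2 k1 σ d f lam1 lam2 q C (deriv g1 z) (g1 z) (g2 z) (deriv (deriv g2) z) s
  convert this using 2 <;> ring

lemma contFi (k1 σ d f lam1 lam2 q C : ℝ) {g1 g2 : ℝ → ℝ}
    (h1 : Continuous g1) (h1' : Continuous (deriv g1))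
    (h2 : Continuous g2) (h2'' : Continuous (deriv (deriv g2))) :
    Continuous fun p : ℝ × ℝ => Fi k1 σ d f lam1 lam2 q C g1 g2 p.1 p.2 := by
  unfold Fi; fun_prop

lemma contFi' (k1 σ d f lam1 lam2 q C : ℝ) {g1 g2 : ℝ → ℝ}
    (h1 : Continuous g1) (h1' : Continuous (deriv g1))
    (h2 : Continuous g2) (h2'' : Continuous (deriv (deriv g2))) :
    Continuous fun p : ℝ × ℝ => Fi' k1 σ d f lam1 lam2 q C g1 g2 p.1 p.2 := by
  unfold Fi'; fun_prop

lemma contFi'' (k1 σ d f lam1 lam2 q C : ℝ) {g1 g2 : ℝ → ℝ}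
    (h1 : Continuous g1) (h1' : Continuous (deriv g1))
    (h2 : Continuous g2) (h2'' : Continuous (deriv (deriv g2))) :
    Continuous fun p : ℝ × ℝ => Fi'' k1 σ d f lam1 lam2 q C g1 g2 p.1 p.2 := by
  unfold Fi''; fun_prop


lemma repF1D (k1 σ d f lam1 lam2 q θ0 h : ℝ) (hk1 : 0 < k1)
    {g1 g2 : ℝ → ℝ} (hg1 : ContDiff ℝ (⊤ : ℕ∞) g1) (hg2 : ContDiff ℝ (⊤ : ℕ∞) g2) (s : ℝ) :
    F1D k1 k1 k1 σ d f lam1 lam2 q θ0 h (fun z => s * g1 z) (fun z => s * g2 z)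
      = ∫ z in (0:ℝ)..h, Fi k1 σ d f lam1 lam2 q (Real.cos θ0 ^ 2) g1 g2 s z := by
  unfold F1D Fi
  congr 1
  funext z
  have hd1 : deriv (fun z => s * g1 z) z = s * deriv g1 z :=
    deriv_const_mul s ((hg1.differentiable (by simp)) z)
  have hD1 : deriv (fun z => s * g2 z) = fun z => s * deriv g2 z :=
    funext fun z => deriv_const_mul s ((hg2.differentiable (by simp)) z)
  have hg2' : Differentiable ℝ (deriv g2) :=
    ((contDiff_infty_iff_deriv.mp (hg2.of_le (mod_cast le_top))).2).differentiable (by simp)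
  have hd2 : deriv (deriv (fun z => s * g2 z)) z = s * deriv (deriv g2) z := by
    rw [hD1]; exact deriv_const_mul s (hg2' z)
  simp only [hd1, hd2]
  have hden : k1 * Real.cos (s * g1 z) ^ 2 + k1 * Real.sin (s * g1 z) ^ 2 = k1 := by
    rw [← mul_add, Real.cos_sq_add_sin_sq, mul_one]
  rw [hden]
  field_simp

/-- With `k₁ = k₂ = k₃ > 0`, `λ₁, λ₂, f > 0`, `0 < θ₀ < π/2`,
`q = 2πn₀/h`: the cholesteric configuration `(θ ≡ 0, δρ ≡ 0)` is a critical point of the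
1D reduced energy for every value of `d`; its second variation at a perturbation
`(η₁, η₂)` equals `∫₀ʰ [2k₁(η₁')² + 2k₁σ²η₁² + (d + 2λ₂q⁴cos⁴θ₀)η₂² + 2λ₁(η₂''+q²η₂)²]`;
if `d + 2λ₂q⁴cos⁴θ₀ ≥ 0` this quadratic form is nonnegative on
`W^{1,2}(0,h) × (h-periodic W^{2,2})` (stability); and if `d + 2λ₂q⁴cos⁴θ₀ < 0` the
perturbation `η₂(z) = sin(qz)` gives `δ²F(0, η₂) = (h/2)(d + 2λ₂q⁴cos⁴θ₀) < 0`
(instability). -/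
theorem stmt_15 (k1 k2 k3 σ d f lam1 lam2 q θ0 h : ℝ) (n0 : ℕ)
    (hk12 : k1 = k2) (hk23 : k2 = k3) (hk1 : 0 < k1)
    (hl1 : 0 < lam1) (hl2 : 0 < lam2) (hf : 0 < f)
    (hθ0 : 0 < θ0) (hθ0' : θ0 < Real.pi / 2)
    (hh : 0 < h) (hn0 : 0 < n0) (hq : q = 2 * Real.pi * n0 / h) (hσ : σ ≠ 0) :
    -- `(θ ≡ 0, δρ ≡ 0)` is a critical point, for every value of `d`:
    (∀ d' : ℝ, ∀ g1 g2 : ℝ → ℝ, ContDiff ℝ (⊤ : ℕ∞) g1 → ContDiff ℝ (⊤ : ℕ∞) g2 →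
      deriv g1 0 = 0 → deriv g1 h = 0 →
      g2 0 = g2 h → deriv g2 0 = deriv g2 h → deriv (deriv g2) 0 = deriv (deriv g2) h →
      HasDerivAt
        (fun s : ℝ => F1D k1 k2 k3 σ d' f lam1 lam2 q θ0 h
          (fun z => s * g1 z) (fun z => s * g2 z)) 0 0) ∧
    -- the second variation at `(0,0)` is the quadratic form `secondVar`:
    (∀ g1 g2 : ℝ → ℝ, ContDiff ℝ (⊤ : ℕ∞) g1 → ContDiff ℝ (⊤ : ℕ∞) g2 →
      deriv g1 0 = 0 → deriv g1 h = 0 →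
      g2 0 = g2 h → deriv g2 0 = deriv g2 h → deriv (deriv g2) 0 = deriv (deriv g2) h →
      iteratedDeriv 2
        (fun s : ℝ => F1D k1 k2 k3 σ d f lam1 lam2 q θ0 h
          (fun z => s * g1 z) (fun z => s * g2 z)) 0 =
        secondVar k1 σ d lam1 lam2 q θ0 h g1 g2) ∧
    -- stability for `d + 2λ₂q⁴cos⁴θ₀ ≥ 0`:
    (0 ≤ d + 2 * lam2 * q ^ 4 * Real.cos θ0 ^ 4 →
      ∀ g1 g2 : ℝ → ℝ, MemW12I h g1 → PerW22 h g2 →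
        0 ≤ secondVar k1 σ d lam1 lam2 q θ0 h g1 g2) ∧
    -- instability for `d + 2λ₂q⁴cos⁴θ₀ < 0`:
    (d + 2 * lam2 * q ^ 4 * Real.cos θ0 ^ 4 < 0 →
      secondVar k1 σ d lam1 lam2 q θ0 h (fun _ => 0) (fun z => Real.sin (q * z)) =
          h / 2 * (d + 2 * lam2 * q ^ 4 * Real.cos θ0 ^ 4) ∧
        h / 2 * (d + 2 * lam2 * q ^ 4 * Real.cos θ0 ^ 4) < 0) := by

  subst hk12; subst hk23
  have hn0' : (0:ℝ) < n0 := by exact_mod_cast hn0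
  have hq0 : 0 < q := by rw [hq]; positivity
  refine ⟨?_, ?_, ?_, ?_⟩
  · -- critical point
    intro d' g1 g2 hg1 hg2 _ _ _ _ _
    have hc1 : Continuous g1 := hg1.continuous
    have hc1' : Continuous (deriv g1) := hg1.continuous_deriv (mod_cast le_top)
    have hc2 : Continuous g2 := hg2.continuous
    have hI := (contDiff_infty_iff_deriv.mp (hg2.of_le (mod_cast le_top))).2
    have hc2'' : Continuous (deriv (deriv g2)) :=
      hI.continuous_deriv (by exact_mod_cast le_top)
    have hrep : (fun s : ℝ => F1D k1 k1 k1 σ d' f lam1 lam2 q θ0 h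
        (fun z => s * g1 z) (fun z => s * g2 z))
        = fun s : ℝ => ∫ z in (0:ℝ)..h,
            Fi k1 σ d' f lam1 lam2 q (Real.cos θ0 ^ 2) g1 g2 s z :=
      funext fun s => repF1D k1 σ d' f lam1 lam2 q θ0 h hk1 hg1 hg2 s
    rw [hrep]
    have H := param_hasDerivAt
      (contFi k1 σ d' f lam1 lam2 q (Real.cos θ0 ^ 2) hc1 hc1' hc2 hc2'')
      (contFi' k1 σ d' f lam1 lam2 q (Real.cos θ0 ^ 2) hc1 hc1' hc2 hc2'')
      (fun z s => hdFi k1 σ d' f lam1 lam2 q (Real.cos θ0 ^ 2) g1 g2 z s) 0 h 0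
    have h0 : (∫ z in (0:ℝ)..h, Fi' k1 σ d' f lam1 lam2 q (Real.cos θ0 ^ 2) g1 g2 0 z) = 0 := by
      have hz : ∀ z, Fi' k1 σ d' f lam1 lam2 q (Real.cos θ0 ^ 2) g1 g2 0 z = 0 := by
        intro z; unfold Fi'; norm_num
      simp [hz]
    rwa [h0] at H
  · -- second variation
    intro g1 g2 hg1 hg2 _ _ _ _ _
    have hc1 : Continuous g1 := hg1.continuous
    have hc1' : Continuous (deriv g1) := hg1.continuous_deriv (mod_cast le_top)
    have hc2 : Continuous g2 := hg2.continuous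
    have hI := (contDiff_infty_iff_deriv.mp (hg2.of_le (mod_cast le_top))).2
    have hc2'' : Continuous (deriv (deriv g2)) :=
      hI.continuous_deriv (by exact_mod_cast le_top)
    have hrep : (fun s : ℝ => F1D k1 k1 k1 σ d f lam1 lam2 q θ0 h
        (fun z => s * g1 z) (fun z => s * g2 z))
        = fun s : ℝ => ∫ z in (0:ℝ)..h,
            Fi k1 σ d f lam1 lam2 q (Real.cos θ0 ^ 2) g1 g2 s z :=
      funext fun s => repF1D k1 σ d f lam1 lam2 q θ0 h hk1 hg1 hg2 s
    have hit : iteratedDeriv 2 (fun s : ℝ => F1D k1 k1 k1 σ d f lam1 lam2 q θ0 h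
        (fun z => s * g1 z) (fun z => s * g2 z))
        = deriv (deriv (fun s : ℝ => F1D k1 k1 k1 σ d f lam1 lam2 q θ0 h
          (fun z => s * g1 z) (fun z => s * g2 z))) := by
      rw [show (2:ℕ) = 0+1+1 from rfl, iteratedDeriv_succ, iteratedDeriv_succ,
        iteratedDeriv_zero]
    have hd1fun : deriv (fun s : ℝ => ∫ z in (0:ℝ)..h,
          Fi k1 σ d f lam1 lam2 q (Real.cos θ0 ^ 2) g1 g2 s z)
        = fun s : ℝ => ∫ z in (0:ℝ)..h,
            Fi' k1 σ d f lam1 lam2 q (Real.cos θ0 ^ 2) g1 g2 s z :=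
      funext fun s => (param_hasDerivAt
        (contFi k1 σ d f lam1 lam2 q (Real.cos θ0 ^ 2) hc1 hc1' hc2 hc2'')
        (contFi' k1 σ d f lam1 lam2 q (Real.cos θ0 ^ 2) hc1 hc1' hc2 hc2'')
        (fun z s => hdFi k1 σ d f lam1 lam2 q (Real.cos θ0 ^ 2) g1 g2 z s) 0 h s).deriv
    have hd2 : deriv (fun s : ℝ => ∫ z in (0:ℝ)..h,
          Fi' k1 σ d f lam1 lam2 q (Real.cos θ0 ^ 2) g1 g2 s z) 0
        = ∫ z in (0:ℝ)..h, Fi'' k1 σ d f lam1 lam2 q (Real.cos θ0 ^ 2) g1 g2 0 z :=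
      (param_hasDerivAt
        (contFi' k1 σ d f lam1 lam2 q (Real.cos θ0 ^ 2) hc1 hc1' hc2 hc2'')
        (contFi'' k1 σ d f lam1 lam2 q (Real.cos θ0 ^ 2) hc1 hc1' hc2 hc2'')
        (fun z s => hdFi' k1 σ d f lam1 lam2 q (Real.cos θ0 ^ 2) g1 g2 z s) 0 h 0).deriv
    rw [hit, hrep, hd1fun, hd2]
    unfold secondVar
    congr 1
    funext z
    unfold Fi''
    norm_num
    ring
  · -- stability
    intro hnn g1 g2 _ _
    unfold secondVar
    apply intervalIntegral.integral_nonneg hh.le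
    intro u _
    have t3 : 0 ≤ (d + 2*lam2*q^4*Real.cos θ0^4) * (g2 u)^2 :=
      mul_nonneg hnn (sq_nonneg _)
    have t1 : 0 ≤ 2*k1*(deriv g1 u)^2 := by positivity
    have t2 : 0 ≤ 2*k1*σ^2*(g1 u)^2 := by positivity
    have t4 : 0 ≤ 2*lam1*(deriv (deriv g2) u + q^2*g2 u)^2 := by positivity
    linarith
  · -- instability
    intro hneg
    have hqz : ∀ z : ℝ, HasDerivAt (fun z : ℝ => q * z) q z := fun z => by
      simpa using (hasDerivAt_id z).const_mul q
    have hder0 : deriv (fun _ : ℝ => (0:ℝ)) = fun _ => (0:ℝ) :=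
      funext fun z => deriv_const z 0
    have hd1 : deriv (fun z => Real.sin (q*z)) = fun z => Real.cos (q*z) * q :=
      funext fun z => ((Real.hasDerivAt_sin (q*z)).comp z (hqz z)).deriv
    have hd2 : deriv (deriv (fun z => Real.sin (q*z))) = fun z => -Real.sin (q*z) * q * q := by
      rw [hd1]
      exact funext fun z => (((Real.hasDerivAt_cos (q*z)).comp z (hqz z)).mul_const q).deriv
    have hqh : q * h = ((2*n0 : ℕ) : ℝ) * Real.pi := by
      rw [hq]; field_simp; push_cast; ring
    have hsin0 : Real.sin (q*h) = 0 := by rw [hqh]; exact Real.sin_nat_mul_pi _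
    have hA : ∀ z ∈ Set.uIcc (0:ℝ) h, HasDerivAt
        (fun z => z/2 - Real.sin (q*z) * Real.cos (q*z) / (2*q)) (Real.sin (q*z)^2) z := by
      intro z _
      have h1 : HasDerivAt (fun z : ℝ => z/2) (1/2) z := by
        simpa using (hasDerivAt_id z).div_const 2
      have hs := (Real.hasDerivAt_sin (q*z)).comp z (hqz z)
      have hc := (Real.hasDerivAt_cos (q*z)).comp z (hqz z)
      have h2 := (hs.mul hc).div_const (2*q)
      have H := h1.sub h2
      refine H.congr_deriv ?_
      simp only [Function.comp_apply]
      have hpy := Real.sin_sq_add_cos_sq (q*z)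
      field_simp
      nlinarith [hpy]
    have hIntS : IntervalIntegrable (fun z => Real.sin (q*z)^2) volume 0 h :=
      (by fun_prop : Continuous fun z => Real.sin (q*z)^2).intervalIntegrable 0 h
    have hsinint : (∫ z in (0:ℝ)..h, Real.sin (q*z)^2) = h/2 := by
      rw [intervalIntegral.integral_eq_sub_of_hasDerivAt hA hIntS]
      rw [hsin0]
      norm_num
    have key : secondVar k1 σ d lam1 lam2 q θ0 h (fun _ => 0) (fun z => Real.sin (q * z))
        = h / 2 * (d + 2 * lam2 * q ^ 4 * Real.cos θ0 ^ 4) := by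
      unfold secondVar
      have : (∫ z in (0:ℝ)..h,
          (2 * k1 * (deriv (fun _ : ℝ => (0:ℝ)) z) ^ 2
            + 2 * k1 * σ ^ 2 * ((fun _ : ℝ => (0:ℝ)) z) ^ 2
            + (d + 2 * lam2 * q ^ 4 * Real.cos θ0 ^ 4) * ((fun z => Real.sin (q*z)) z) ^ 2
            + 2 * lam1 * (deriv (deriv (fun z => Real.sin (q*z))) z
                + q ^ 2 * (fun z => Real.sin (q*z)) z) ^ 2))
          = ∫ z in (0:ℝ)..h,
              (d + 2 * lam2 * q ^ 4 * Real.cos θ0 ^ 4) * Real.sin (q*z)^2 := by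
        congr 1
        funext z
        simp only [hder0, hd2]
        ring
      rw [this, intervalIntegral.integral_const_mul, hsinint]
      ring
    exact ⟨key, mul_neg_of_pos_of_neg (by linarith) hneg⟩
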